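/- Let z be a formal power series over ℚ with constant term 1 satisfying s·z(s)^ν = z(s) − 1 for an integer ν ≥ 2. Then the coefficient of s^j in z(s) is (1/j)·C(νj, j−1) for all j ≥ 1. -/

import Mathlib

/-!
Multiplying the functional equation by `z ^ m` gives `z ^ (m + 1) = z ^ m + X * z ^ (ν + m)`, i.e.
`[s^(j+1)] z^(m+1) = [s^(j+1)] z^m + [s^j] z^(ν+m)`. The Raney numbers `r / (p n + r) * C(p n + r, n)`
satisfy the same recursion by Pascal's rule, so induction on `j` and then on `m` identifies every
coefficient of every power of `z` with a Raney number; the case `m = 1` is the claim.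
-/

open PowerSeries

/-- By Lagrange inversion, the coefficient of `s ^ n` in `z ^ r` when `z = 1 + s * z ^ p`.
At `n = r = 0` the division by zero gives `0` rather than `1`. -/
def raney (p r n : ℕ) : ℚ := r / (p * n + r) * (p * n + r).choose n

lemma raney_one (p r : ℕ) : raney p r 1 = r := by
  rcases Nat.eq_zero_or_pos r with rfl | hr
  · simp [raney]
  · have : (p + r : ℚ) ≠ 0 := by positivity
    simp only [raney, Nat.choose_one_right, mul_one]
    push_cast
    field_simp

lemma raney_one_left (p n : ℕ) :
    raney p 1 (n + 1) = 1 / (n + 1) * (p * (n + 1)).choose n := by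
  have h : ((p * (n + 1) + 1 : ℕ) : ℚ) * (p * (n + 1)).choose n
      = ((p * (n + 1) + 1).choose (n + 1) : ℚ) * (n + 1) := by
    exact_mod_cast Nat.add_one_mul_choose_eq (p * (n + 1)) n
  simp only [raney]
  push_cast at h ⊢
  field_simp
  linear_combination -h

lemma Nat.choose_succ_mul_add_choose_mul (N n : ℕ) :
    N.choose (n + 1) * (n + 1) + N.choose n * n = N.choose n * N := by
  rcases le_or_gt n N with h | h
  · rw [Nat.choose_succ_right_eq, ← mul_add, Nat.sub_add_cancel h]
  · simp [Nat.choose_eq_zero_of_lt h, Nat.choose_eq_zero_of_lt (Nat.lt_succ_of_lt h)]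

lemma raney_succ_succ (p r n : ℕ) (hn : 1 ≤ n) :
    raney p (r + 1) (n + 1) = raney p r (n + 1) + raney p (p + r) n := by
  obtain ⟨N, hN⟩ : ∃ N, p * (n + 1) + r = N := ⟨_, rfl⟩
  rcases Nat.eq_zero_or_pos N with rfl | hpos
  · obtain ⟨rfl, rfl⟩ : p = 0 ∧ r = 0 := by constructor <;> nlinarith
    simp [raney, Nat.choose_eq_zero_of_lt (by omega : 1 < n + 1)]
  have hpascal : ((N + 1).choose (n + 1) : ℚ) = N.choose n + N.choose (n + 1) := by
    exact_mod_cast Nat.choose_succ_succ N n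
  have hratio : (N.choose (n + 1) * (n + 1) + N.choose n * n : ℚ) = N.choose n * N := by
    exact_mod_cast Nat.choose_succ_mul_add_choose_mul N n
  have hNQ : (p * (n + 1) + r : ℚ) = N := by exact_mod_cast hN
  have hN0 : (N : ℚ) ≠ 0 := by positivity
  simp only [raney]
  rw [show p * n + (p + r) = N by rw [← hN]; ring, show p * (n + 1) + (r + 1) = N + 1 by omega,
    hN, hpascal]
  push_cast
  rw [show (p * n + (p + r) : ℚ) = N by rw [← hNQ]; ring,
    show (p * (n + 1) + (r + 1) : ℚ) = N + 1 by rw [← hNQ]; ring, hNQ]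
  field_simp
  rw [← hNQ] at hratio ⊢
  linear_combination (p : ℚ) * hratio

section FunctionalEquation

variable {R : Type*} [CommRing R] {ν : ℕ} {z : R⟦X⟧}

lemma constantCoeff_eq_one_of_X_mul_pow_eq_sub_one (hz : X * z ^ ν = z - 1) :
    constantCoeff z = 1 := by
  have h := congrArg constantCoeff hz
  simp only [map_mul, constantCoeff_X, zero_mul, map_sub, map_one] at h
  exact sub_eq_zero.mp h.symm

lemma coeff_succ_pow_succ_of_X_mul_pow_eq_sub_one (hz : X * z ^ ν = z - 1) (j m : ℕ) :
    coeff (j + 1) (z ^ (m + 1)) = coeff (j + 1) (z ^ m) + coeff j (z ^ (ν + m)) := by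
  have hpow : z ^ (m + 1) = z ^ m + X * z ^ (ν + m) := by linear_combination -z ^ m * hz
  rw [hpow, map_add, coeff_succ_X_mul]

end FunctionalEquation

theorem coeff_pow_eq_raney {ν : ℕ} {z : ℚ⟦X⟧} (hz : X * z ^ ν = z - 1) {j : ℕ} (hj : 1 ≤ j)
    (m : ℕ) : coeff j (z ^ m) = raney ν m j := by
  induction j, hj using Nat.le_induction generalizing m with
  | base =>
    induction m with
    | zero => simp [raney_one]
    | succ m ih =>
      rw [coeff_succ_pow_succ_of_X_mul_pow_eq_sub_one hz, ih, coeff_zero_eq_constantCoeff, map_pow,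
        constantCoeff_eq_one_of_X_mul_pow_eq_sub_one hz, one_pow, raney_one, raney_one]
      push_cast
      ring
  | succ n hn ih =>
    induction m with
    | zero => simp [raney, coeff_one]
    | succ m ihm =>
      rw [coeff_succ_pow_succ_of_X_mul_pow_eq_sub_one hz, ihm, ih, raney_succ_succ ν m n hn]

theorem higher_catalan_gf_general (ν : ℕ) (z : PowerSeries ℚ)
    (heq : X * z ^ ν = z - 1) :
    ∀ j : ℕ, 1 ≤ j → coeff j z = (1 / j : ℚ) * ((ν * j).choose (j - 1)) := by
  intro j hj
  obtain ⟨n, rfl⟩ := Nat.exists_eq_add_of_le' hj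
  rw [← pow_one z, coeff_pow_eq_raney heq hj, raney_one_left]
  simp

/-- If z is a formal power series over ℚ with constant term 1 satisfying
s·z^ν = z − 1, then the coefficient of s^j in z is (1/j)·C(νj, j−1) for j ≥ 1. -/
theorem higher_catalan_gf (ν : ℕ) (hν : 2 ≤ ν) (z : PowerSeries ℚ)
    (h0 : constantCoeff z = 1) (heq : X * z ^ ν = z - 1) :
    ∀ j : ℕ, 1 ≤ j → coeff j z = (1 / j : ℚ) * ((ν * j).choose (j - 1)) :=
  higher_catalan_gf_general ν z heq
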